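/- Let F : ℝ^d → ℝ be C² and (ρ,∞)-convex (F'' ≥ ρ Id), and let X : [0,T] → ℝ^d solve Newton's equation Ẍ = F''(X)F'(X). Then |Ẋ(0) + F'(X(0))|² ≤ e^{−2ρT} |Ẋ(T) + F'(X(T))|². -/

import Mathlib

/-!
Put `Y = Ẋ + ∇F(X)`. Newton's equation says `Ẍ = ½ ∇‖∇F‖²(X) = ∇²F(X) ∇F(X)`, so, the Hessian
being symmetric, `Ẏ = ∇²F(X) Ẋ + ∇²F(X) ∇F(X) = ∇²F(X) Y`. Hence
`d/dt ‖Y‖² = 2 ⟪∇²F(X) Y, Y⟫ ≥ 2ρ ‖Y‖²`, i.e. `t ↦ e^{-2ρt} ‖Y t‖²` is nondecreasing on `[0, T]`.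
-/

open Real Set InnerProductSpace
open scoped RealInnerProductSpace Gradient

section Gradient

variable {E : Type*} [NormedAddCommGroup E] [InnerProductSpace ℝ E] [CompleteSpace E]
  {F : E → ℝ} {x : E}

theorem ContDiff.gradient {n m : WithTop ℕ∞} (hF : ContDiff ℝ n F) (hmn : m + 1 ≤ n) :
    ContDiff ℝ m (∇ F) :=
  (toDual ℝ E).symm.contDiff.comp (hF.fderiv_right hmn)

theorem hasFDerivAt_gradient (h : DifferentiableAt ℝ (fderiv ℝ F) x) :
    HasFDerivAt (∇ F) ((toDual ℝ E).symm.toContinuousLinearEquiv.toContinuousLinearMap.comp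
      (fderiv ℝ (fderiv ℝ F) x)) x :=
  (toDual ℝ E).symm.toContinuousLinearEquiv.hasFDerivAt.comp x h.hasFDerivAt

theorem inner_fderiv_gradient_apply (h : DifferentiableAt ℝ (fderiv ℝ F) x) (v w : E) :
    ⟪fderiv ℝ (∇ F) x v, w⟫ = fderiv ℝ (fderiv ℝ F) x v w := by
  rw [(hasFDerivAt_gradient h).fderiv]
  exact toDual_symm_apply

theorem ContDiffAt.inner_fderiv_gradient_comm (hF : ContDiffAt ℝ 2 F x) (v w : E) :
    ⟪fderiv ℝ (∇ F) x v, w⟫ = ⟪v, fderiv ℝ (∇ F) x w⟫ := by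
  have hd : DifferentiableAt ℝ (fderiv ℝ F) x :=
    (hF.fderiv_right (m := 1) le_rfl).differentiableAt one_ne_zero
  rw [real_inner_comm (fderiv ℝ (∇ F) x w) v, inner_fderiv_gradient_apply hd,
    inner_fderiv_gradient_apply hd]
  exact hF.isSymmSndFDerivAt (by simp) v w

theorem ContDiffAt.gradient_norm_sq_gradient (hF : ContDiffAt ℝ 2 F x) :
    ∇ (fun y => ‖∇ F y‖ ^ 2) x = (2 : ℝ) • fderiv ℝ (∇ F) x (∇ F x) := by
  have hd : DifferentiableAt ℝ (∇ F) x :=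
    (hasFDerivAt_gradient ((hF.fderiv_right (m := 1) le_rfl).differentiableAt
      one_ne_zero)).differentiableAt
  refine HasGradientAt.gradient (hasGradientAt_iff_hasFDerivAt.mpr ?_)
  refine hd.hasFDerivAt.norm_sq.congr_fderiv ?_
  ext w
  simp [toDual_apply_apply, hF.inner_fderiv_gradient_comm]

end Gradient

theorem norm_sq_le_exp_mul_norm_sq_of_le_inner_deriv {E : Type*} [NormedAddCommGroup E]
    [InnerProductSpace ℝ E] {Y Y' : ℝ → E} {ρ a b : ℝ} (hab : a ≤ b)
    (hcont : ContinuousOn Y (Icc a b)) (hY : ∀ t ∈ Ioo a b, HasDerivAt Y (Y' t) t)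
    (hgrowth : ∀ t ∈ Ioo a b, ρ * ‖Y t‖ ^ 2 ≤ ⟪Y' t, Y t⟫) :
    ‖Y a‖ ^ 2 ≤ exp (-2 * ρ * (b - a)) * ‖Y b‖ ^ 2 := by
  set φ : ℝ → ℝ := fun t => exp (-2 * ρ * (t - a)) * ‖Y t‖ ^ 2
  set φ' : ℝ → ℝ := fun t => exp (-2 * ρ * (t - a)) * (2 * (⟪Y' t, Y t⟫ - ρ * ‖Y t‖ ^ 2))
  have hφ : ∀ t ∈ Ioo a b, HasDerivAt φ (φ' t) t := by
    intro t ht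
    have hexp : HasDerivAt (fun t => exp (-2 * ρ * (t - a)))
        (exp (-2 * ρ * (t - a)) * (-2 * ρ)) t := by
      simpa using (((hasDerivAt_id t).sub_const a).const_mul (-2 * ρ)).exp
    refine (hexp.mul (hY t ht).norm_sq).congr_deriv ?_
    rw [real_inner_comm]
    ring
  have hmono : MonotoneOn φ (Icc a b) := by
    refine monotoneOn_of_hasDerivWithinAt_nonneg (convex_Icc a b) (f' := φ') (by fun_prop)
      (fun t ht => ?_) (fun t ht => ?_) <;> rw [interior_Icc] at ht
    · exact (hφ t ht).hasDerivWithinAt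
    · exact mul_nonneg (exp_pos _).le (by linarith [hgrowth t ht])
  simpa [φ] using hmono (left_mem_Icc.2 hab) (right_mem_Icc.2 hab) hab

theorem stmt_9 (d : ℕ) (T ρ : ℝ) (hT : 0 < T)
    (F : EuclideanSpace ℝ (Fin d) → ℝ) (hF : ContDiff ℝ 2 F)
    (hconv : ∀ x v : EuclideanSpace ℝ (Fin d),
      ρ * ‖v‖ ^ 2 ≤ ⟪fderiv ℝ (gradient F) x v, v⟫)
    (X : ℝ → EuclideanSpace ℝ (Fin d)) (hX : ContDiff ℝ 2 X)
    (hNewton : ∀ t ∈ Icc (0:ℝ) T,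
      deriv (deriv X) t = (1/2 : ℝ) • gradient (fun x => ‖gradient F x‖ ^ 2) (X t)) :
    ‖deriv X 0 + gradient F (X 0)‖ ^ 2
      ≤ Real.exp (-2 * ρ * T) * ‖deriv X T + gradient F (X T)‖ ^ 2 := by
  set G := ∇ F
  have hG : Differentiable ℝ G := (hF.gradient (m := 1) le_rfl).differentiable one_ne_zero
  have hXd : Differentiable ℝ X := hX.differentiable two_ne_zero
  set Y := fun t => deriv X t + G (X t)
  have hY : ∀ t, HasDerivAt Y (deriv (deriv X) t + fderiv ℝ G (X t) (deriv X t)) t := fun t =>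
    (hX.differentiable_deriv_two t).hasDerivAt.add
      ((hG (X t)).hasFDerivAt.comp_hasDerivAt t (hXd t).hasDerivAt)
  have hYode : ∀ t ∈ Icc 0 T,
      deriv (deriv X) t + fderiv ℝ G (X t) (deriv X t) = fderiv ℝ G (X t) (Y t) := by
    intro t ht
    rw [hNewton t ht, hF.contDiffAt.gradient_norm_sq_gradient, smul_smul, one_div,
      inv_mul_cancel₀ two_ne_zero, one_smul, map_add, add_comm]
  have key := norm_sq_le_exp_mul_norm_sq_of_le_inner_deriv hT.le
    (fun t _ => (hY t).continuousAt.continuousWithinAt) (fun t _ => hY t)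
    (fun t ht => hYode t (Ioo_subset_Icc_self ht) ▸ hconv (X t) (Y t))
  simpa using key
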